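/- arXiv:2503.20550 — 5 statements merged into one kernel-verified Lean document; each statement's English description precedes it below -/
import Mathlib

section
/- Let T be a tree of order n and let k be an integer with 2 ≤ k ≤ n. Then the vertex set of T can be covered by a family of at most 4n/k subtrees, each of order at most k, such that any two distinct subtrees in the family share at most one vertex. -/
open SimpleGraph

set_option linter.unusedSectionVars false
set_option maxHeartbeats 1000000

namespace TreeCoverAux

variable {V : Type*} [Fintype V] [DecidableEq V] {T : SimpleGraph V}

lemma induce_singleton_connected (T : SimpleGraph V) (v : V) :
    (T.induce {v}).Connected := by
  rw [connected_iff_exists_forall_reachable]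
  refine ⟨⟨v, rfl⟩, ?_⟩
  rintro ⟨w, hw⟩
  have : w = v := hw
  subst this
  exact Reachable.refl _

lemma reach_of_support {s : Set V} {x y : V} (p : T.Walk x y)
    (hp : ∀ z ∈ p.support, z ∈ s) (hx : x ∈ s) (hy : y ∈ s) :
    (T.induce s).Reachable ⟨x, hx⟩ ⟨y, hy⟩ := by
  have hc := p.connected_induce_support
  have hr := hc.preconnected ⟨x, p.start_mem_support⟩ ⟨y, p.end_mem_support⟩
  have hs : {z | z ∈ p.support} ⊆ s := fun z hz => hp z hz
  exact hr.map (T.induceHomOfLE hs).toHom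

lemma exists_crossing {C : Set V} : ∀ {x y : V} (p : T.Walk x y), x ∈ C → y ∉ C →
    ∃ a ∈ C, ∃ b, b ∉ C ∧ T.Adj a b ∧ a ∈ p.support ∧ b ∈ p.support := by
  intro x y p
  induction p with
  | nil => intro hx hy; exact absurd hx hy
  | @cons u w y h q ih =>
    intro hx hy
    by_cases hw : w ∈ C
    · obtain ⟨a, ha, b, hb, hab, has, hbs⟩ := ih hw hy
      exact ⟨a, ha, b, hb, hab, by simp [has], by simp [hbs]⟩
    · exact ⟨u, hx, w, hw, h, by simp, by simp⟩

lemma greedy_prefix {a : ℕ} : ∀ (l : List ℕ), (∀ x ∈ l, x ≤ a) → ∀ b, 1 ≤ b → b ≤ l.sum →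
    ∃ n, b ≤ (l.take n).sum ∧ (l.take n).sum < a + b := by
  intro l
  induction l with
  | nil => intro _ b hb hsum; simp at hsum; omega
  | cons x xs ih =>
    intro hle b hb hsum
    by_cases hxb : b ≤ x
    · refine ⟨1, by simpa using hxb, ?_⟩
      have := hle x List.mem_cons_self
      simpa using by omega
    · have hx : x < b := not_le.mp hxb
      simp only [List.sum_cons] at hsum
      obtain ⟨n, h1, h2⟩ := ih (fun y hy => hle y (List.mem_cons_of_mem _ hy)) (b - x)
        (by omega) (by omega)
      refine ⟨n + 1, ?_, ?_⟩ <;> simp only [List.take_succ_cons, List.sum_cons] <;> omega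



/-- The vertex set (in `V`) of a connected component of the graph induced on `Y`. -/
def Sc {Y : Set V} (c : (T.induce Y).ConnectedComponent) : Set V := Subtype.val '' c.supp

variable {Y : Set V}

lemma Sc_subset (c : (T.induce Y).ConnectedComponent) : Sc (T := T) c ⊆ Y := by
  rintro _ ⟨z, _, rfl⟩; exact z.2

lemma mem_Sc_self {x : V} (hx : x ∈ Y) :
    x ∈ Sc ((T.induce Y).connectedComponentMk ⟨x, hx⟩) := ⟨⟨x, hx⟩, rfl, rfl⟩

lemma Sc_eq_of_mem {x : V} {c d : (T.induce Y).ConnectedComponent}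
    (hc : x ∈ Sc (T := T) c) (hd : x ∈ Sc (T := T) d) : c = d := by
  obtain ⟨z, hz, rfl⟩ := hc
  obtain ⟨w, hw, hwz⟩ := hd
  have : w = z := Subtype.ext hwz
  subst this
  rw [ConnectedComponent.mem_supp_iff] at hz hw
  rw [← hz, ← hw]

lemma walk_comp {a b : ↥Y} (p : (T.induce Y).Walk a b) {z : ↥Y} (hz : z ∈ p.support) :
    (T.induce Y).connectedComponentMk z = (T.induce Y).connectedComponentMk a :=
  (ConnectedComponent.sound ⟨p.takeUntil z hz⟩).symm

lemma comp_supp_connected (c : (T.induce Y).ConnectedComponent) :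
    (T.induce (Sc (T := T) c)).Connected := by
  obtain ⟨x0, rfl⟩ := c.exists_rep
  have hx0 : (x0 : V) ∈ Sc (T := T) ((T.induce Y).connectedComponentMk x0) := ⟨x0, rfl, rfl⟩
  apply T.induce_connected_of_patches (x0 : V) hx0
  rintro w ⟨w', hw', rfl⟩
  have hreach : (T.induce Y).Reachable x0 w' := by
    rw [ConnectedComponent.mem_supp_iff] at hw'
    exact ConnectedComponent.exact hw'.symm
  obtain ⟨p⟩ := hreach
  set q := p.map (SimpleGraph.Embedding.induce Y).toHom with hq
  have hqsupp : ∀ z ∈ q.support, z ∈ Sc (T := T) ((T.induce Y).connectedComponentMk x0) := by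
    intro z hz
    rw [hq, Walk.support_map, List.mem_map] at hz
    obtain ⟨z', hz', rfl⟩ := hz
    exact ⟨z', by rw [ConnectedComponent.mem_supp_iff, walk_comp p hz'], rfl⟩
  refine ⟨{z | z ∈ q.support}, fun z hz => hqsupp z hz, q.start_mem_support,
    q.end_mem_support, ?_⟩
  exact (q.connected_induce_support).preconnected _ _

lemma adj_witness {C : Set V} {v : V} (hC : (T.induce C).Connected) (hv : v ∈ C)
    (c : (T.induce (C \ {v})).ConnectedComponent) :
    ∃ w, w ∈ Sc (T := T) c ∧ T.Adj v w := by
  obtain ⟨x0, rfl⟩ := c.exists_rep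
  have hx0C : (x0 : V) ∈ C := x0.2.1
  have hx0v : (x0 : V) ≠ v := x0.2.2
  obtain ⟨p⟩ := hC.preconnected ⟨v, hv⟩ ⟨x0, hx0C⟩
  set q0 := p.map (SimpleGraph.Embedding.induce C).toHom with hq0
  have hq0supp : ∀ z ∈ q0.support, z ∈ C := by
    intro z hz
    rw [hq0, Walk.support_map, List.mem_map] at hz
    obtain ⟨z', _, rfl⟩ := hz
    exact z'.2
  -- take a path from v to x0 inside C
  set q := q0.toPath.1 with hqdef
  have hqsupp : ∀ z ∈ q.support, z ∈ C := fun z hz =>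
    hq0supp z (Walk.support_toPath_subset q0 hz)
  have hqpath : q.IsPath := q0.toPath.2
  obtain ⟨w, hadj, r, hr⟩ := Walk.exists_eq_cons_of_ne (Ne.symm hx0v) q
  have hrsupp : ∀ z ∈ r.support, z ∈ C \ {v} := by
    intro z hz
    refine ⟨hqsupp z (by have h := congrArg (fun w => z ∈ Walk.support w) hr; exact h.mpr (List.mem_cons_of_mem _ hz)), ?_⟩
    intro hzv
    subst hzv
    rw [hr] at hqpath
    exact ((Walk.cons_isPath_iff _ _).mp hqpath).2 hz
  have hwY : w ∈ C \ {v} := hrsupp w r.start_mem_support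
  have hx0Y : (x0 : V) ∈ C \ {v} := x0.2
  have hreach := reach_of_support (s := C \ {v}) r hrsupp hwY hx0Y
  refine ⟨w, ⟨⟨w, hwY⟩, ?_, rfl⟩, hadj⟩
  refine (ConnectedComponent.mem_supp_iff _ _).mpr ?_
  exact (ConnectedComponent.sound hreach)

lemma attach_connected {C : Set V} {v : V} (hC : (T.induce C).Connected) (hv : v ∈ C)
    (𝒞 : Set ((T.induce (C \ {v})).ConnectedComponent)) :
    (T.induce ({v} ∪ ⋃ c ∈ 𝒞, Sc (T := T) c)).Connected := by
  apply T.induce_connected_of_patches v (Or.inl rfl)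
  intro w hw
  rcases hw with hw | hw
  · refine ⟨{v}, Set.subset_union_left.trans' (by simp), rfl, hw, ?_⟩
    have he : (⟨w, hw⟩ : ({v} : Set V)) = ⟨v, rfl⟩ := Subtype.ext hw
    rw [he]
  · rw [Set.mem_iUnion₂] at hw
    obtain ⟨c, hc, hwc⟩ := hw
    obtain ⟨w0, hw0, hadj⟩ := adj_witness hC hv c
    have hconn : (T.induce ({v} ∪ Sc (T := T) c)).Connected :=
      connected_induce_union (induce_singleton_connected T v).preconnected (comp_supp_connected c).preconnected
        rfl hw0 hadj
    refine ⟨{v} ∪ Sc (T := T) c, ?_, Or.inl rfl, Or.inr hwc, hconn.preconnected _ _⟩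
    exact Set.union_subset_union_right _ (Set.subset_biUnion_of_mem hc)

lemma ncard_biUnion (𝒟 : Finset ((T.induce (Y : Set V)).ConnectedComponent)) :
    (⋃ c ∈ 𝒟, Sc (T := T) c).ncard = ∑ c ∈ 𝒟, (Sc (T := T) c).ncard := by
  classical
  induction 𝒟 using Finset.induction with
  | empty => simp
  | @insert a s ha ih =>
    have hunion : (⋃ c ∈ insert a s, Sc (T := T) c) =
        Sc (T := T) a ∪ ⋃ c ∈ s, Sc (T := T) c := by
      simp [Set.biUnion_insert]
    rw [hunion, Set.ncard_union_eq ?_ (Set.toFinite _) (Set.toFinite _),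
      Finset.sum_insert ha, ih]
    rw [Set.disjoint_left]
    intro x hx hx'
    rw [Set.mem_iUnion₂] at hx'
    obtain ⟨d, hd, hxd⟩ := hx'
    exact ha ((Sc_eq_of_mem hx hxd) ▸ hd)

lemma biUnion_univ_eq (Y : Set V) [Fintype ((T.induce Y).ConnectedComponent)] :
    (⋃ c ∈ (Finset.univ : Finset ((T.induce Y).ConnectedComponent)), Sc (T := T) c) = Y := by
  classical
  apply Set.Subset.antisymm
  · refine Set.iUnion₂_subset fun c _ => Sc_subset c
  · intro x hx
    exact Set.mem_biUnion (Finset.mem_univ _) (mem_Sc_self hx)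

lemma remainder_eq {C A : Set V} {v : V} (hCA : C ⊆ A) (hvC : v ∈ C) (hvA : v ∈ A)
    [Fintype ((T.induce (C \ {v})).ConnectedComponent)]
    [DecidableEq ((T.induce (C \ {v})).ConnectedComponent)]
    (𝒟 : Finset ((T.induce (C \ {v})).ConnectedComponent)) :
    A \ (⋃ c ∈ 𝒟, Sc (T := T) c) = (A \ C) ∪ ({v} ∪ ⋃ c ∈ 𝒟ᶜ, Sc (T := T) c) := by
  ext x
  constructor
  · rintro ⟨hxA, hxD⟩
    by_cases hxC : x ∈ C
    · by_cases hxv : x = v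
      · exact Or.inr (Or.inl hxv)
      · have hxY : x ∈ C \ {v} := ⟨hxC, hxv⟩
        set c := (T.induce (C \ {v})).connectedComponentMk ⟨x, hxY⟩ with hc
        have hxc : x ∈ Sc (T := T) c := mem_Sc_self hxY
        have hcD : c ∉ 𝒟 := by
          intro hcD
          exact hxD (Set.mem_biUnion hcD hxc)
        exact Or.inr (Or.inr (Set.mem_biUnion (Finset.mem_compl.mpr hcD) hxc))
    · exact Or.inl ⟨hxA, hxC⟩
  · rintro (⟨hxA, hxC⟩ | hx)
    · refine ⟨hxA, fun hxD => ?_⟩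
      rw [Set.mem_iUnion₂] at hxD
      obtain ⟨c, _, hxc⟩ := hxD
      exact hxC ((Sc_subset c hxc).1)
    · rcases hx with hxv | hx
      · subst hxv
        refine ⟨hvA, fun hxD => ?_⟩
        rw [Set.mem_iUnion₂] at hxD
        obtain ⟨c, _, hxc⟩ := hxD
        exact (Sc_subset c hxc).2 rfl
      · rw [Set.mem_iUnion₂] at hx
        obtain ⟨c, hc, hxc⟩ := hx
        refine ⟨hCA (Sc_subset c hxc).1, fun hxD => ?_⟩
        rw [Set.mem_iUnion₂] at hxD
        obtain ⟨d, hd, hxd⟩ := hxD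
        rw [Sc_eq_of_mem hxc hxd] at hc
        exact Finset.mem_compl.mp hc hd

lemma ext_lemma {k : ℕ} (hk2 : 2 ≤ k) {A : Set V} (hA : (T.induce A).Connected)
    (hbig : k < A.ncard) :
    ∃ P B : Set V, ∃ v : V, P ∪ B = A ∧ P ∩ B ⊆ {v} ∧ (T.induce P).Connected ∧
      (T.induce B).Connected ∧ P.ncard ≤ k ∧ B.ncard + k / 2 ≤ A.ncard ∧ B.Nonempty := by
  classical
  set t := k / 2 + 1 with ht
  set 𝒮 := {C : Set V | C ⊆ A ∧ (T.induce C).Connected ∧ t ≤ C.ncard ∧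
    ((A \ C).Nonempty → (T.induce (A \ C)).Connected)} with h𝒮
  have hAS : A ∈ 𝒮 := by
    refine ⟨subset_rfl, hA, by omega, fun h => ?_⟩
    simp at h
  obtain ⟨C, hCS, hmin⟩ := Set.exists_min_image 𝒮 Set.ncard (Set.toFinite _) ⟨A, hAS⟩
  obtain ⟨hCA, hCconn, hCcard, hACconn⟩ := hCS
  have hCne : C.Nonempty := Set.nonempty_of_ncard_ne_zero (by omega)
  -- choose the cut vertex v
  have hvex : ∃ v ∈ C, ((A \ C).Nonempty → ∃ u ∈ A \ C, T.Adj v u) := by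
    by_cases hAC : (A \ C).Nonempty
    · obtain ⟨a, ha⟩ := hAC
      obtain ⟨c0, hc0⟩ := hCne
      obtain ⟨p⟩ := hA.preconnected ⟨c0, hCA hc0⟩ ⟨a, ha.1⟩
      set q := p.map (SimpleGraph.Embedding.induce A).toHom with hq
      have hsupp : ∀ z ∈ q.support, z ∈ A := by
        intro z hz
        rw [hq, Walk.support_map, List.mem_map] at hz
        obtain ⟨z', _, rfl⟩ := hz
        exact z'.2
      obtain ⟨x, hxC, y, hyC, hadj, hxs, hys⟩ := exists_crossing q hc0 ha.2
      exact ⟨x, hxC, fun _ => ⟨y, ⟨hsupp y hys, hyC⟩, hadj⟩⟩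
    · obtain ⟨v, hv⟩ := hCne
      exact ⟨v, hv, fun h => absurd h hAC⟩
  obtain ⟨v, hvC, hvadj⟩ := hvex
  have hvA : v ∈ A := hCA hvC
  set Y := C \ {v} with hYdef
  have hYA : Y ⊆ A := fun x hx => hCA hx.1
  have hYcard : Y.ncard = C.ncard - 1 := Set.ncard_diff_singleton_of_mem hvC
  haveI : DecidableEq ((T.induce Y).ConnectedComponent) := Classical.decEq _
  haveI : Fintype ((T.induce Y).ConnectedComponent) := Fintype.ofFinite _
  -- the remainder of removing a union of components is connected
  have hrem : ∀ 𝒟 : Finset ((T.induce Y).ConnectedComponent),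
      (T.induce (A \ ⋃ c ∈ 𝒟, Sc (T := T) c)).Connected := by
    intro 𝒟
    rw [remainder_eq hCA hvC hvA 𝒟]
    rcases Set.eq_empty_or_nonempty (A \ C) with hAC | hAC
    · rw [hAC, Set.empty_union]
      exact attach_connected hCconn hvC (𝒟ᶜ : Finset _)
    · obtain ⟨u, hu, hadj⟩ := hvadj hAC
      rw [Set.union_comm]
      exact connected_induce_union (attach_connected hCconn hvC (𝒟ᶜ : Finset _)).preconnected
        (hACconn hAC).preconnected (Or.inl rfl) hu hadj
  -- all components are small
  have hcomp_le : ∀ c : (T.induce Y).ConnectedComponent, (Sc (T := T) c).ncard ≤ k / 2 := by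
    intro c
    by_contra hlarge
    have hmem : Sc (T := T) c ∈ 𝒮 := by
      refine ⟨(Sc_subset c).trans hYA, comp_supp_connected c, by omega, fun _ => ?_⟩
      have h1 := hrem {c}
      have he : (⋃ c' ∈ ({c} : Finset _), Sc (T := T) c') = Sc (T := T) c := by simp
      rwa [he] at h1
    have h2 := hmin _ hmem
    have h3 : (Sc (T := T) c).ncard ≤ Y.ncard :=
      Set.ncard_le_ncard (Sc_subset c) (Set.toFinite _)
    omega
  -- greedy choice of a prefix of components
  set cs := (Finset.univ : Finset ((T.induce Y).ConnectedComponent)).toList with hcs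
  set l := cs.map (fun c => (Sc (T := T) c).ncard) with hl
  have hsum : l.sum = Y.ncard := by
    rw [hl, hcs, Finset.sum_map_toList, ← ncard_biUnion, biUnion_univ_eq]
  have hYbig : k / 2 ≤ Y.ncard := by omega
  have hlle : ∀ x ∈ l, x ≤ k / 2 := by
    intro x hx
    rw [hl, List.mem_map] at hx
    obtain ⟨c, _, rfl⟩ := hx
    exact hcomp_le c
  obtain ⟨n, hn1, hn2⟩ := greedy_prefix l hlle (k / 2) (by omega) (by omega)
  set 𝒟 := (cs.take n).toFinset with h𝒟
  set D := ⋃ c ∈ 𝒟, Sc (T := T) c with hD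
  have hDcard : D.ncard = (l.take n).sum := by
    rw [hD, ncard_biUnion, h𝒟, List.sum_toFinset _ ((Finset.nodup_toList _).sublist
      (List.take_sublist n cs)), hl, List.map_take]
  have hDY : D ⊆ Y := by
    rw [hD]
    exact Set.iUnion₂_subset fun c _ => Sc_subset c
  have hDA : D ⊆ A := hDY.trans hYA
  have hvD : v ∉ D := fun h => (hDY h).2 rfl
  refine ⟨insert v D, A \ D, v, ?_, ?_, ?_, ?_, ?_, ?_, ⟨v, hvA, hvD⟩⟩
  · ext x
    constructor
    · rintro (hx | hx)
      · rcases hx with hx | hx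
        · exact hx ▸ hvA
        · exact hDA hx
      · exact hx.1
    · intro hx
      by_cases hxD : x ∈ D
      · exact Or.inl (Or.inr hxD)
      · exact Or.inr ⟨hx, hxD⟩
  · rintro x ⟨hxP, hxB⟩
    rcases hxP with hx | hx
    · exact hx
    · exact absurd hx hxB.2
  · rw [Set.insert_eq, hD, ← Finset.set_biUnion_coe]
    exact attach_connected hCconn hvC (𝒟 : Set _)
  · exact hrem 𝒟
  · have := Set.ncard_insert_le v D
    omega
  · have hdiff : (A \ D).ncard = A.ncard - D.ncard := Set.ncard_diff hDA (Set.toFinite _)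
    have hDle : D.ncard ≤ A.ncard := Set.ncard_le_ncard hDA (Set.toFinite _)
    omega

lemma cover_lemma {k : ℕ} (hk2 : 2 ≤ k) :
    ∀ (m : ℕ) (A : Set V), A.ncard ≤ m → (T.induce A).Connected → A.Nonempty →
    ∃ F : Finset (Set V), (∀ S ∈ F, S ⊆ A ∧ (T.induce S).Connected ∧ S.ncard ≤ k) ∧
      (∀ x ∈ A, ∃ S ∈ F, x ∈ S) ∧ (∀ S ∈ F, ∀ S' ∈ F, S ≠ S' → (S ∩ S').ncard ≤ 1) ∧
      (F.card - 1) * (k / 2) + 1 ≤ A.ncard := by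
  classical
  intro m
  induction m with
  | zero =>
    intro A hm hconn hne
    have := (Set.ncard_pos (Set.toFinite A)).mpr hne
    omega
  | succ m ih =>
    intro A hm hconn hne
    by_cases hk : A.ncard ≤ k
    · have hpos := (Set.ncard_pos (Set.toFinite A)).mpr hne
      refine ⟨{A}, ?_, ?_, ?_, ?_⟩
      · intro S hS
        rw [Finset.mem_singleton] at hS
        subst hS
        exact ⟨subset_rfl, hconn, hk⟩
      · intro x hx
        exact ⟨A, Finset.mem_singleton_self A, hx⟩
      · intro S hS S' hS' hne'
        rw [Finset.mem_singleton] at hS hS'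
        exact absurd (hS.trans hS'.symm) hne'
      · simpa using Nat.one_le_of_lt hpos
    · obtain ⟨P, B, v, hPB, hPBint, hPc, hBc, hPk, hBcard, hBne⟩ :=
        ext_lemma hk2 hconn (not_le.mp hk)
      have hBA : B ⊆ A := hPB ▸ Set.subset_union_right
      have hPA : P ⊆ A := hPB ▸ Set.subset_union_left
      have h2 : 1 ≤ k / 2 := by omega
      have hBm : B.ncard ≤ m := by omega
      obtain ⟨F, hF1, hF2, hF3, hF4⟩ := ih B hBm hBc hBne
      have hFne : 1 ≤ F.card := by
        obtain ⟨x, hx⟩ := hBne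
        obtain ⟨S, hS, _⟩ := hF2 x hx
        exact Finset.card_pos.mpr ⟨S, hS⟩
      refine ⟨insert P F, ?_, ?_, ?_, ?_⟩
      · intro S hS
        rcases Finset.mem_insert.mp hS with rfl | hS
        · exact ⟨hPA, hPc, hPk⟩
        · obtain ⟨h1, h2, h3⟩ := hF1 S hS
          exact ⟨h1.trans hBA, h2, h3⟩
      · intro x hx
        rw [← hPB] at hx
        rcases hx with hx | hx
        · exact ⟨P, Finset.mem_insert_self _ _, hx⟩
        · obtain ⟨S, hS, hxS⟩ := hF2 x hx
          exact ⟨S, Finset.mem_insert_of_mem hS, hxS⟩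
      · have key : ∀ S' ∈ F, (P ∩ S').ncard ≤ 1 := by
          intro S' hS'
          have hsub : P ∩ S' ⊆ {v} := fun x hx =>
            hPBint ⟨hx.1, (hF1 S' hS').1 hx.2⟩
          calc (P ∩ S').ncard ≤ ({v} : Set V).ncard :=
                Set.ncard_le_ncard hsub (Set.toFinite _)
            _ = 1 := Set.ncard_singleton v
        intro S hS S' hS' hne'
        rcases Finset.mem_insert.mp hS with h1 | h1
        · rcases Finset.mem_insert.mp hS' with h2 | h2
          · exact absurd (h1.trans h2.symm) hne'
          · rw [h1]
            exact key S' h2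
        · rcases Finset.mem_insert.mp hS' with h2 | h2
          · rw [h2, Set.inter_comm]
            exact key S h1
          · exact hF3 S h1 S' h2 hne'
      · have hcard : (insert P F).card ≤ F.card + 1 := Finset.card_insert_le _ _
        have hAcard : A.ncard = (P ∪ B).ncard := by rw [hPB]
        obtain ⟨c, hc⟩ : ∃ c, F.card = c + 1 := ⟨F.card - 1, by omega⟩
        rw [hc] at hF4
        simp only [Nat.add_sub_cancel] at hF4
        have h5 : ((insert P F).card - 1) ≤ c + 1 := by omega
        have h6 : ((insert P F).card - 1) * (k / 2) ≤ (c + 1) * (k / 2) :=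
          Nat.mul_le_mul_right _ h5
        have h7 : (c + 1) * (k / 2) = c * (k / 2) + k / 2 := by ring
        omega

theorem tree_cover_main {k : ℕ} (hT : T.Connected) (hk2 : 2 ≤ k)
    (hkn : k ≤ Fintype.card V) :
    ∃ F : Finset (Set V),
      (∀ S ∈ F, (T.induce S).Connected ∧ S.ncard ≤ k) ∧
      (∀ v : V, ∃ S ∈ F, v ∈ S) ∧
      (∀ S ∈ F, ∀ S' ∈ F, S ≠ S' → (S ∩ S').ncard ≤ 1) ∧
      (F.card : ℝ) ≤ 4 * (Fintype.card V : ℝ) / (k : ℝ) := by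
  classical
  have hVpos : 0 < Fintype.card V := by omega
  haveI : Nonempty V := Fintype.card_pos_iff.mp hVpos
  have huniv_card : (Set.univ : Set V).ncard = Fintype.card V := by
    rw [Set.ncard_univ, Nat.card_eq_fintype_card]
  have huniv_conn : (T.induce (Set.univ : Set V)).Connected :=
    (T.induceUnivIso.connected_iff).mpr hT
  obtain ⟨F, hF1, hF2, hF3, hF4⟩ := cover_lemma hk2 (Fintype.card V) Set.univ
    (le_of_eq huniv_card) huniv_conn Set.univ_nonempty
  have hFne : 1 ≤ F.card := by
    obtain ⟨S, hS, _⟩ := hF2 (Classical.arbitrary V) trivial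
    exact Finset.card_pos.mpr ⟨S, hS⟩
  rw [huniv_card] at hF4
  set n := Fintype.card V
  -- integer bound : k * F.card ≤ 4 * n
  have hint : k * F.card ≤ 4 * n := by
    obtain ⟨c, hc⟩ : ∃ c, F.card = c + 1 := ⟨F.card - 1, by omega⟩
    rw [hc] at hF4 ⊢
    simp only [Nat.add_sub_cancel] at hF4
    have hk3 : k ≤ 3 * (k / 2) := by omega
    have h1 : k * c ≤ (3 * (k / 2)) * c := Nat.mul_le_mul_right _ hk3
    have h2 : (3 * (k / 2)) * c = 3 * ((k / 2) * c) := by ring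
    have hcomm : (k / 2) * c = c * (k / 2) := Nat.mul_comm _ _
    have h3 : c * (k / 2) ≤ n - 1 := by omega
    have h4 : k * (c + 1) = k * c + k := by ring
    omega
  refine ⟨F, fun S hS => ⟨(hF1 S hS).2.1, (hF1 S hS).2.2⟩, fun v => hF2 v trivial, hF3, ?_⟩
  rw [le_div_iff₀ (by positivity : (0 : ℝ) < (k : ℝ))]
  have : (F.card : ℝ) * (k : ℝ) = ((F.card * k : ℕ) : ℝ) := by push_cast; ring
  rw [this]
  have h4n : ((F.card * k : ℕ) : ℝ) ≤ ((4 * n : ℕ) : ℝ) := by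
    exact_mod_cast (by rw [Nat.mul_comm]; exact hint : F.card * k ≤ 4 * n)
  calc ((F.card * k : ℕ) : ℝ) ≤ ((4 * n : ℕ) : ℝ) := h4n
    _ = 4 * (n : ℝ) := by push_cast; ring

end TreeCoverAux

/-- A tree of order `n` can be vertex-covered by at most `4n/k` subtrees,
each of order at most `k`, any two of which share at most one vertex. -/
theorem tree_cover_by_small_subtrees {V : Type*} [Fintype V] [DecidableEq V]
    (T : SimpleGraph V) (hT : T.IsTree) (k : ℕ)
    (hk2 : 2 ≤ k) (hkn : k ≤ Fintype.card V) :
    ∃ F : Finset (Set V),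
      (∀ S ∈ F, (T.induce S).Connected ∧ S.ncard ≤ k) ∧
      (∀ v : V, ∃ S ∈ F, v ∈ S) ∧
      (∀ S ∈ F, ∀ S' ∈ F, S ≠ S' → (S ∩ S').ncard ≤ 1) ∧
      (F.card : ℝ) ≤ 4 * (Fintype.card V : ℝ) / (k : ℝ) :=
  TreeCoverAux.tree_cover_main hT.isConnected hk2 hkn
end

section
/- Let G be the tree obtained from a path P with 2m+1 vertices by attaching a pendant edge uv at the midpoint vertex u, and place k = m−1 labeled pebbles on the m−1 leftmost vertices of P with all other vertices unoccupied. Then any sequence of moves that moves the leftmost pebble to the rightmost vertex of P has length at least ∑_{i=1}^{m-1} i = m(m−1)/2. -/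
/-- A single pebble move: some pebble `i` shifts to an adjacent vertex that is
unoccupied, all other pebbles staying put. -/
def PebbleMove {V : Type*} {n : ℕ} (G : SimpleGraph V) (f g : Fin n → V) : Prop :=
  ∃ i : Fin n, G.Adj (f i) (g i) ∧ (∀ j : Fin n, f j ≠ g i) ∧
    ∀ j : Fin n, j ≠ i → g j = f j

/-- `Steps M t a b`: `b` is reachable from `a` in exactly `t` steps of the relation `M`. -/
def Steps {α : Type*} (M : α → α → Prop) : ℕ → α → α → Prop
  | 0, a, b => a = b
  | (t + 1), a, b => ∃ c, M a c ∧ Steps M t c b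


namespace Pendant

/-- coordinate of a vertex: path vertex `p` has coordinate `p`, the pendant has `m+1`. -/
def cd (m : ℕ) : (Fin (2 * m + 1) ⊕ Unit) → ℕ
  | Sum.inl p => p.val
  | Sum.inr _ => m + 1

/-- the pendant-path graph. -/
def GG (m : ℕ) : SimpleGraph (Fin (2 * m + 1) ⊕ Unit) :=
  SimpleGraph.fromEdgeSet
    ({e | ∃ i : Fin (2 * m), e = s(Sum.inl i.castSucc, Sum.inl i.succ)} ∪
      {s(Sum.inl ⟨m, by omega⟩, Sum.inr ())})

lemma cd_dist {m : ℕ} {x y : Fin (2 * m + 1) ⊕ Unit} (h : (GG m).Adj x y) :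
    cd m x ≤ cd m y + 1 ∧ cd m y ≤ cd m x + 1 := by
  rw [GG, SimpleGraph.fromEdgeSet_adj] at h
  obtain ⟨hmem, -⟩ := h
  rcases hmem with ⟨i, hi⟩ | hs
  · rw [Sym2.eq_iff] at hi
    rcases hi with ⟨rfl, rfl⟩ | ⟨rfl, rfl⟩ <;> simp [cd] <;> omega
  · simp only [Set.mem_singleton_iff, Sym2.eq_iff] at hs
    rcases hs with ⟨rfl, rfl⟩ | ⟨rfl, rfl⟩ <;> simp [cd] <;> omega

lemma eq_of_cd_eq {m : ℕ} {z w : Fin (2 * m + 1) ⊕ Unit}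
    (hz : cd m z < m) (hw : cd m w < m) (h : cd m z = cd m w) : z = w := by
  cases z with
  | inr u => simp [cd] at hz
  | inl a =>
    cases w with
    | inr u => simp [cd] at hw
    | inl b => simp only [cd] at h; exact congrArg _ (Fin.ext h)

end Pendant

namespace Pendant

lemma steps_traj {α : Type*} {M : α → α → Prop} {t : ℕ} {a b : α} (h : Steps M t a b) :
    ∃ τ : ℕ → α, τ 0 = a ∧ τ t = b ∧ ∀ i < t, M (τ i) (τ (i + 1)) := by
  induction t generalizing a with
  | zero => exact ⟨fun _ => a, rfl, h, fun i hi => absurd hi (by omega)⟩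
  | succ t ih =>
    obtain ⟨c, hac, hcb⟩ := h
    obtain ⟨τ, h0, ht, hstep⟩ := ih hcb
    refine ⟨fun n => match n with | 0 => a | (k+1) => τ k, rfl, ht, ?_⟩
    intro i hi
    match i with
    | 0 => simpa [h0] using hac
    | (k+1) => exact hstep k (by omega)

/-- the chase invariant: if pebble `p` starts strictly left of pebble `q`,
`q` starts in the left segment, and `p` eventually reaches coordinate `≥ m`,
then `q` must at some time have coordinate `≥ m`. -/
lemma chase {m n : ℕ} {τ : ℕ → (Fin n → (Fin (2 * m + 1) ⊕ Unit))} {t : ℕ}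
    (hstep : ∀ i < t, PebbleMove (GG m) (τ i) (τ (i + 1)))
    (p q : Fin n)
    (h0 : cd m (τ 0 p) < cd m (τ 0 q)) (hq0 : cd m (τ 0 q) < m)
    (hfar : m ≤ cd m (τ t p)) :
    ∃ s ≤ t, m ≤ cd m (τ s q) := by
  by_contra hc
  push_neg at hc
  have key : ∀ s, s ≤ t → cd m (τ s p) < cd m (τ s q) := by
    intro s
    induction s with
    | zero => intro _; exact h0
    | succ s ih =>
      intro hs
      have hst : s ≤ t := by omega
      have IH := ih hst
      obtain ⟨i, hadj, hunocc, hfix⟩ := hstep s (by omega)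
      have hqlt : cd m (τ s q) < m := hc s hst
      have hqlt' : cd m (τ (s + 1) q) < m := hc (s + 1) hs
      by_cases hip : i = p
      · rw [hip] at hadj hunocc
        have hqfix : τ (s + 1) q = τ s q := hfix q (by rw [hip]; rintro rfl; omega)
        have hd := cd_dist hadj
        rw [hqfix]
        have hle : cd m (τ (s + 1) p) ≤ cd m (τ s q) := by omega
        rcases lt_or_eq_of_le hle with h | h
        · exact h
        · exact absurd (eq_of_cd_eq hqlt (by omega) h.symm)
            (fun he => hunocc q he)
      · by_cases hiq : i = q
        · rw [hiq] at hadj hunocc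
          have hpfix : τ (s + 1) p = τ s p := hfix p (by rw [hiq]; rintro rfl; omega)
          have hd := cd_dist hadj
          rw [hpfix]
          have hge : cd m (τ s p) ≤ cd m (τ (s + 1) q) := by omega
          rcases lt_or_eq_of_le hge with h | h
          · exact h
          · exact absurd (eq_of_cd_eq (by omega) hqlt' h)
              (fun he => hunocc p he)
        · rw [hfix p (fun h' => hip h'.symm), hfix q (fun h' => hiq h'.symm)]
          exact IH
  have h1 := key t le_rfl
  have h2 := hc t le_rfl
  omega

/-- number of moves of pebble `p` during the first `t` steps. -/
def mvs {α : Type*} [DecidableEq α] {n : ℕ} (τ : ℕ → (Fin n → α)) (p : Fin n) (t : ℕ) : ℕ :=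
  ((Finset.range t).filter (fun i => τ i p ≠ τ (i + 1) p)).card

lemma mvs_mono {α : Type*} [DecidableEq α] {n : ℕ} (τ : ℕ → (Fin n → α)) (p : Fin n)
    {s t : ℕ} (h : s ≤ t) : mvs τ p s ≤ mvs τ p t :=
  Finset.card_le_card (Finset.filter_subset_filter _ (Finset.range_subset_range.2 h))

lemma mvs_succ_of_move {α : Type*} [DecidableEq α] {n : ℕ} {τ : ℕ → (Fin n → α)} {p : Fin n}
    {s : ℕ} (h : τ s p ≠ τ (s + 1) p) : mvs τ p s + 1 ≤ mvs τ p (s + 1) := by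
  have : insert s ((Finset.range s).filter (fun i => τ i p ≠ τ (i + 1) p))
      ⊆ (Finset.range (s + 1)).filter (fun i => τ i p ≠ τ (i + 1) p) := by
    intro x hx
    rcases Finset.mem_insert.1 hx with rfl | hx
    · simp [h]
    · simp only [Finset.mem_filter, Finset.mem_range] at hx ⊢
      exact ⟨by omega, hx.2⟩
  have hcard := Finset.card_le_card this
  rwa [Finset.card_insert_of_notMem (by simp)] at hcard

lemma dist_le_mvs {m n : ℕ} {τ : ℕ → (Fin n → (Fin (2 * m + 1) ⊕ Unit))} {t : ℕ}
    (hstep : ∀ i < t, PebbleMove (GG m) (τ i) (τ (i + 1))) (p : Fin n) :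
    ∀ s, s ≤ t → cd m (τ s p) ≤ cd m (τ 0 p) + mvs τ p s ∧
      cd m (τ 0 p) ≤ cd m (τ s p) + mvs τ p s := by
  intro s
  induction s with
  | zero => intro _; simp [mvs]
  | succ s ih =>
    intro hs
    have IH := ih (by omega)
    by_cases heq : τ s p = τ (s + 1) p
    · have hmono := mvs_mono τ p (show s ≤ s + 1 by omega)
      rw [← heq]
      omega
    · obtain ⟨i, hadj, -, hfix⟩ := hstep s (by omega)
      have hpi : p = i := by
        by_contra hne
        exact heq (hfix p hne).symm
      rw [← hpi] at hadj
      have hd := cd_dist hadj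
      have hm := mvs_succ_of_move heq
      omega

lemma sum_mvs {m n : ℕ} {τ : ℕ → (Fin n → (Fin (2 * m + 1) ⊕ Unit))} {t : ℕ}
    (hstep : ∀ i < t, PebbleMove (GG m) (τ i) (τ (i + 1))) :
    ∑ p : Fin n, mvs τ p t = t := by
  classical
  have huniq : ∀ i < t,
      (Finset.univ.filter (fun p : Fin n => τ i p ≠ τ (i + 1) p)).card = 1 := by
    intro i hi
    obtain ⟨j, hadj, -, hfix⟩ := hstep i hi
    rw [Finset.card_eq_one]
    refine ⟨j, ?_⟩
    ext p
    simp only [Finset.mem_filter, Finset.mem_univ, true_and, Finset.mem_singleton]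
    constructor
    · intro hp
      by_contra hne
      exact hp (hfix p hne).symm
    · rintro rfl
      exact hadj.ne
  calc ∑ p : Fin n, mvs τ p t
      = ∑ p : Fin n, ∑ i ∈ Finset.range t, (if τ i p ≠ τ (i + 1) p then 1 else 0) := by
        apply Finset.sum_congr rfl
        intro p _
        rw [mvs, Finset.card_filter]
    _ = ∑ i ∈ Finset.range t, ∑ p : Fin n, (if τ i p ≠ τ (i + 1) p then 1 else 0) :=
        Finset.sum_comm
    _ = ∑ i ∈ Finset.range t, 1 := by
        apply Finset.sum_congr rfl
        intro i hi
        rw [← Finset.card_filter]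
        exact huniq i (Finset.mem_range.1 hi)
    _ = t := by simp

end Pendant

namespace Pendant

lemma arith (m : ℕ) (hm : 2 ≤ m) :
    m * (m - 1) / 2 ≤ ∑ i ∈ Finset.range (m - 1), (m - i) := by
  have h1 : ∑ i ∈ Finset.range (m - 1), (m - i)
      = ∑ i ∈ Finset.range (m - 1), (i + 2) := by
    rw [← Finset.sum_range_reflect]
    apply Finset.sum_congr rfl
    intro i hi
    rw [Finset.mem_range] at hi
    omega
  rw [h1, Finset.sum_add_distrib, Finset.sum_const, Finset.card_range, smul_eq_mul]
  set S := ∑ i ∈ Finset.range (m - 1), i with hSdef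
  have hS : S * 2 = (m - 1) * (m - 1 - 1) := Finset.sum_range_id_mul_two (m - 1)
  have key : m * (m - 1) ≤ (S + (m - 1) * 2) * 2 := by
    calc m * (m - 1) = (m - 1) * m := Nat.mul_comm _ _
      _ ≤ (m - 1) * (m - 1 - 1 + 4) := Nat.mul_le_mul_left _ (by omega)
      _ = (m - 1) * (m - 1 - 1) + (m - 1) * 4 := Nat.mul_add _ _ _
      _ = S * 2 + (m - 1) * 4 := by rw [hS]
      _ = (S + (m - 1) * 2) * 2 := by ring
  calc m * (m - 1) / 2 ≤ (S + (m - 1) * 2) * 2 / 2 := Nat.div_le_div_right key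
    _ = S + (m - 1) * 2 := Nat.mul_div_cancel _ (by norm_num)

end Pendant


/-- On the path `w₀, …, w_{2m}` (so `2m+1` vertices) with one pendant
vertex attached at the midpoint `w_m`, with `m−1` labeled pebbles on the `m−1` leftmost
vertices, any move sequence taking the leftmost pebble to the rightmost vertex `w_{2m}`
has length at least `∑_{i=1}^{m-1} i = m(m−1)/2`. -/
theorem pendant_path_lower_bound (m : ℕ) (hm : 2 ≤ m) :
    ∀ (G : SimpleGraph (Fin (2 * m + 1) ⊕ Unit)),
    G = SimpleGraph.fromEdgeSet
        ({e | ∃ i : Fin (2 * m), e = s(Sum.inl i.castSucc, Sum.inl i.succ)} ∪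
          {s(Sum.inl ⟨m, by omega⟩, Sum.inr ())}) →
    ∀ (f : Fin (m - 1) → (Fin (2 * m + 1) ⊕ Unit)),
    (∀ i : Fin (m - 1), f i = Sum.inl ⟨(i : ℕ), by omega⟩) →
    ∀ (t : ℕ) (g : Fin (m - 1) → (Fin (2 * m + 1) ⊕ Unit)),
      Steps (PebbleMove G) t f g →
      g ⟨0, by omega⟩ = Sum.inl ⟨2 * m, by omega⟩ →
      m * (m - 1) / 2 ≤ t := by
  intro G hG f hf t g hSteps hgoal
  subst hG
  obtain ⟨τ, h0, ht, hstep⟩ := Pendant.steps_traj hSteps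
  have hstep' : ∀ i < t, PebbleMove (Pendant.GG m) (τ i) (τ (i + 1)) := hstep
  -- coordinates of starting positions
  have hcd0 : ∀ p : Fin (m - 1), Pendant.cd m (τ 0 p) = (p : ℕ) := by
    intro p
    rw [h0, hf p]
    rfl
  -- pebble 0 ends at coordinate 2m
  have p0 : Fin (m - 1) := ⟨0, by omega⟩
  have hcdt : Pendant.cd m (τ t ⟨0, by omega⟩) = 2 * m := by
    rw [ht, hgoal]
    rfl
  -- every pebble makes at least m - p moves
  have hb : ∀ p : Fin (m - 1), m - (p : ℕ) ≤ Pendant.mvs τ p t := by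
    intro p
    by_cases hp : (p : ℕ) = 0
    · have hzero : p = ⟨0, by omega⟩ := Fin.ext hp
      have hcdtp : Pendant.cd m (τ t p) = 2 * m := by rw [hzero]; exact hcdt
      have hd := (Pendant.dist_le_mvs hstep' p t le_rfl).1
      rw [hcd0 p, hcdtp] at hd
      omega
    · -- use the chase lemma with chaser pebble 0
      have hch := Pendant.chase hstep' ⟨0, by omega⟩ p ?_ ?_ ?_
      · obtain ⟨s, hs, hms⟩ := hch
        have hd := (Pendant.dist_le_mvs hstep' p s hs).1
        have hmono := Pendant.mvs_mono τ p hs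
        rw [hcd0 p] at hd
        omega
      · rw [hcd0, hcd0]
        simp only [Fin.val_mk]
        omega
      · rw [hcd0]
        have := p.isLt
        omega
      · rw [hcdt]
        omega
  have hsum := Pendant.sum_mvs hstep'
  have hge : ∑ p : Fin (m - 1), (m - (p : ℕ)) ≤ ∑ p : Fin (m - 1), Pendant.mvs τ p t :=
    Finset.sum_le_sum (fun p _ => hb p)
  rw [hsum] at hge
  have harr : ∑ p : Fin (m - 1), (m - (p : ℕ)) = ∑ i ∈ Finset.range (m - 1), (m - i) :=
    Fin.sum_univ_eq_sum_range (fun i => m - i) (m - 1)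
  have := Pendant.arith m hm
  omega
end

section
/- Let G be a finite tree and S₁, S₂ ⊆ V(G) with |S₁| = |S₂| = n, and suppose n indistinguishable pebbles occupy exactly the vertices of S₁. Then there exists a sequence of moves of length at most n·D(G) transporting the pebbles so that they occupy exactly the vertices of S₂. -/
/-- A move of indistinguishable pebbles: one pebble shifts from an occupied vertex `u`
to an unoccupied adjacent vertex `v`. -/
def UnlabeledMove {V : Type*} [DecidableEq V] (G : SimpleGraph V)
    (S S' : Finset V) : Prop :=
  ∃ u v : V, u ∈ S ∧ v ∉ S ∧ G.Adj u v ∧ S' = insert v (S.erase u)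

section StepsLemmas

variable {α : Type*} {M N : α → α → Prop}

lemma steps_mono (h : ∀ a b, M a b → N a b) :
    ∀ t a b, Steps M t a b → Steps N t a b
  | 0, a, b, hs => hs
  | (t + 1), a, b, ⟨c, hm, hs⟩ => ⟨c, h _ _ hm, steps_mono h t c b hs⟩

lemma steps_append : ∀ (s t : ℕ) (a b c : α),
    Steps M s a b → Steps M t b c → Steps M (s + t) a c
  | 0, t, a, b, c, hab, hbc => by
      cases hab; simpa [Nat.zero_add] using hbc
  | (s + 1), t, a, b, c, ⟨d, hm, hs⟩, hbc => by
      have := steps_append s t d b c hs hbc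
      exact (by
        have : Steps M (s + t + 1) a c := ⟨d, hm, this⟩
        simpa [Nat.add_right_comm] using this)

lemma steps_snoc {t : ℕ} {a b c : α} (hab : Steps M t a b) (hbc : M b c) :
    Steps M (t + 1) a c :=
  steps_append t 1 a b c hab ⟨c, hbc, rfl⟩

lemma steps_reverse (hsymm : ∀ a b, M a b → M b a) :
    ∀ (t : ℕ) (a b : α), Steps M t a b → Steps M t b a
  | 0, a, b, hs => hs.symm
  | (t + 1), a, b, ⟨c, hm, hs⟩ => by
      have := steps_reverse hsymm t c b hs
      have := steps_snoc this (hsymm a c hm)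
      exact this

end StepsLemmas

section TreeTransport

variable {V : Type*} [Fintype V] [DecidableEq V] {G : SimpleGraph V}

/-- Moves restricted to stay inside a region `A`. -/
def MA (G : SimpleGraph V) [DecidableEq V] (A : Finset V) (S S' : Finset V) : Prop :=
  UnlabeledMove G S S' ∧ S ⊆ A ∧ S' ⊆ A

lemma unlabeledMove_symm {S S' : Finset V} (h : UnlabeledMove G S S') :
    UnlabeledMove G S' S := by
  obtain ⟨u, v, hu, hv, hadj, rfl⟩ := h
  refine ⟨v, u, Finset.mem_insert_self _ _, ?_, hadj.symm, ?_⟩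
  · intro hmem
    rcases Finset.mem_insert.1 hmem with h | h
    · exact hadj.ne h
    · exact (Finset.notMem_erase u S) h
  · have hv' : v ∉ S.erase u := fun h => hv (Finset.mem_of_mem_erase h)
    rw [Finset.erase_insert hv', Finset.insert_erase hu]

lemma ma_symm {A S S' : Finset V} (h : MA G A S S') : MA G A S' S :=
  ⟨unlabeledMove_symm h.1, h.2.2, h.2.1⟩

lemma ma_mono {A B S S' : Finset V} (hAB : A ⊆ B) (h : MA G A S S') : MA G B S S' :=
  ⟨h.1, h.2.1.trans hAB, h.2.2.trans hAB⟩

/-- Lifting steps from `A.erase ℓ` to `A` by keeping a pebble frozen at `ℓ`. -/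
lemma steps_lift {A : Finset V} {ℓ : V} (hℓ : ℓ ∈ A) :
    ∀ (t : ℕ) (S S' : Finset V), Steps (MA G (A.erase ℓ)) t S S' →
      Steps (MA G A) t (insert ℓ S) (insert ℓ S')
  | 0, S, S', hs => by cases hs; rfl
  | (t + 1), S, S', ⟨c, ⟨⟨u, v, hu, hv, hadj, hc⟩, hSA, hcA⟩, hs⟩ => by
      subst hc
      refine ⟨insert ℓ (insert v (S.erase u)), ⟨⟨u, v, ?_, ?_, hadj, ?_⟩, ?_, ?_⟩, ?_⟩
      · exact Finset.mem_insert_of_mem hu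
      · intro hmem
        rcases Finset.mem_insert.1 hmem with h | h
        · have : v ∈ A.erase ℓ := hcA (Finset.mem_insert_self _ _)
          exact (Finset.ne_of_mem_erase this) h
        · exact hv h
      · have huℓ : ℓ ≠ u := by
          intro h; subst h
          exact (Finset.notMem_erase ℓ A) (hSA hu)
        rw [Finset.erase_insert_of_ne huℓ, Finset.insert_comm]
      · exact Finset.insert_subset hℓ (hSA.trans (Finset.erase_subset _ _))
      · exact Finset.insert_subset hℓ (hcA.trans (Finset.erase_subset _ _))
      · exact steps_lift hℓ t _ S' hs

/-- Moving a single pebble from `u` to `w` along an arbitrary walk inside `A`,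
regardless of where the other pebbles are. -/
lemma walk_move {A : Finset V} :
    ∀ {u w : V} (p : G.Walk u w) (S : Finset V), u ∈ S → w ∉ S → S ⊆ A →
      (∀ z ∈ p.support, z ∈ A) →
      ∃ t ≤ p.length, Steps (MA G A) t S (insert w (S.erase u)) := by
  intro u w p
  induction p with
  | nil => intro S hu hw _ _; exact absurd hu hw
  | @cons u x w hadj q ih =>
      intro S hu hw hSA hsupp
      have hxA : x ∈ A := hsupp x (by simp [SimpleGraph.Walk.support_cons])
      have hsupp' : ∀ z ∈ q.support, z ∈ A := fun z hz =>
        hsupp z (by simp [SimpleGraph.Walk.support_cons, hz])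
      have huw : u ≠ w := fun h => hw (h ▸ hu)
      by_cases hx : x ∈ S
      · -- recurse first (moving the pebble at x to w), then move u → x
        have hxw : x ≠ w := fun h => hw (h ▸ hx)
        obtain ⟨t, ht, hs⟩ := ih S hx hw hSA hsupp'
        set T := insert w (S.erase x) with hT
        have huT : u ∈ T := by
          refine Finset.mem_insert_of_mem (Finset.mem_erase.2 ⟨hadj.ne, hu⟩)
        have hxT : x ∉ T := by
          intro hmem
          rcases Finset.mem_insert.1 hmem with h | h
          · exact hxw h
          · exact (Finset.notMem_erase x S) h
        have hwA : w ∈ A := hsupp' w q.end_mem_support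
        have hTA : T ⊆ A :=
          Finset.insert_subset hwA ((Finset.erase_subset _ _).trans hSA)
        have hmove : MA G A T (insert x (T.erase u)) := by
          refine ⟨⟨u, x, huT, hxT, hadj, rfl⟩, hTA, Finset.insert_subset hxA
            ((Finset.erase_subset _ _).trans hTA)⟩
        have hfin : insert x (T.erase u) = insert w (S.erase u) := by
          ext a
          constructor
          · intro ha
            simp only [hT, Finset.mem_insert, Finset.mem_erase] at ha ⊢
            rcases ha with rfl | ⟨hau, h⟩
            · exact Or.inr ⟨hadj.ne.symm, hx⟩
            · rcases h with rfl | ⟨hax, haS⟩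
              · exact Or.inl rfl
              · exact Or.inr ⟨hau, haS⟩
          · intro ha
            simp only [hT, Finset.mem_insert, Finset.mem_erase] at ha ⊢
            rcases ha with rfl | ⟨hau, haS⟩
            · exact Or.inr ⟨Ne.symm huw, Or.inl rfl⟩
            · by_cases hax : a = x
              · exact Or.inl hax
              · exact Or.inr ⟨hau, Or.inr ⟨hax, haS⟩⟩
        refine ⟨t + 1, ?_, ?_⟩
        · simpa [SimpleGraph.Walk.length_cons] using Nat.add_le_add_right ht 1
        · exact hfin ▸ steps_snoc hs hmove
      · -- move u → x first, then recurse
        set C := insert x (S.erase u) with hC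
        have hCA : C ⊆ A :=
          Finset.insert_subset hxA ((Finset.erase_subset _ _).trans hSA)
        have hmove : MA G A S C := ⟨⟨u, x, hu, hx, hadj, rfl⟩, hSA, hCA⟩
        by_cases hxw : x = w
        · subst hxw
          exact ⟨1, by simp [SimpleGraph.Walk.length_cons], ⟨C, hmove, rfl⟩⟩
        · have hxC : x ∈ C := Finset.mem_insert_self _ _
          have hwC : w ∉ C := by
            intro hmem
            rcases Finset.mem_insert.1 hmem with h | h
            · exact hxw h.symm
            · exact hw (Finset.mem_of_mem_erase h)
          obtain ⟨t, ht, hs⟩ := ih C hxC hwC hCA hsupp'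
          have hCe : C.erase x = S.erase u := by
            rw [hC, Finset.erase_insert]
            intro hmem
            exact hx (Finset.mem_of_mem_erase hmem)
          refine ⟨t + 1, ?_, ⟨C, hmove, ?_⟩⟩
          · simpa [SimpleGraph.Walk.length_cons] using Nat.add_le_add_right ht 1
          · rwa [hCe] at hs

variable (G) in
/-- `Good A`: any two vertices of `A` are joined by a path of length at most the
diameter whose support stays inside `A`. -/
def Good (A : Finset V) : Prop :=
  ∀ x ∈ A, ∀ y ∈ A, ∃ p : G.Walk x y, p.IsPath ∧ p.length ≤ G.diam ∧
    ∀ z ∈ p.support, z ∈ A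

lemma tree_path_length_eq_dist (hT : G.IsTree) {x y : V} (p : G.Walk x y)
    (hp : p.IsPath) : p.length = G.dist x y := by
  obtain ⟨q, hq, hql⟩ := hT.isConnected.exists_path_of_dist x y
  have := (hT.existsUnique_path x y).unique hp hq
  rw [this, hql]

lemma tree_dist_le_diam (hT : G.IsTree) (x y : V) : G.dist x y ≤ G.diam := by
  have : Nonempty V := hT.isConnected.nonempty
  refine SimpleGraph.dist_le_diam ?_
  intro htop
  obtain ⟨u, v, huv⟩ := SimpleGraph.exists_edist_eq_ediam_of_finite (G := G)
  rw [htop] at huv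
  exact (SimpleGraph.edist_ne_top_iff_reachable.2 (hT.isConnected.preconnected u v)) huv

lemma good_univ (hT : G.IsTree) : Good G (Finset.univ : Finset V) := by
  intro x _ y _
  obtain ⟨p, hp, hpl⟩ := hT.isConnected.exists_path_of_dist x y
  exact ⟨p, hp, hpl ▸ tree_dist_le_diam hT x y, fun z _ => Finset.mem_univ z⟩

/-- Separation: if `ℓ` lies on the unique path between `x` and `y` in a tree, then `ℓ`
lies on the unique path from any `r` to `x`, or on the one from `r` to `y`. -/
lemma tree_sep (hT : G.IsTree) {x y ℓ r : V} (p : G.Walk x y) (hp : p.IsPath)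
    (hℓ : ℓ ∈ p.support) (pr : G.Walk r x) (hpr : pr.IsPath)
    (qr : G.Walk r y) (hqr : qr.IsPath) :
    ℓ ∈ pr.support ∨ ℓ ∈ qr.support := by
  by_contra hcon
  push_neg at hcon
  obtain ⟨h1, h2⟩ := hcon
  -- walk from x to y avoiding ℓ
  have w : G.Walk x y := pr.reverse.append qr
  have hwsupp : ℓ ∉ (pr.reverse.append qr).support := by
    rw [SimpleGraph.Walk.mem_support_append_iff]
    rintro (h | h)
    · rw [SimpleGraph.Walk.support_reverse, List.mem_reverse] at h
      exact h1 h
    · exact h2 h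
  set w' := (pr.reverse.append qr).bypass with hw'
  have hw'path : w'.IsPath := SimpleGraph.Walk.bypass_isPath _
  have : w' = p := (hT.existsUnique_path x y).unique hw'path hp
  have : ℓ ∈ w'.support := this ▸ hℓ
  exact hwsupp (SimpleGraph.Walk.support_bypass_subset _ this)

/-- Removing a farthest vertex preserves `Good`. -/
lemma good_erase (hT : G.IsTree) {A : Finset V} (hA : Good G A) {r ℓ : V}
    (hr : r ∈ A) (hℓ : ℓ ∈ A) (hmax : ∀ a ∈ A, G.dist r a ≤ G.dist r ℓ) :
    Good G (A.erase ℓ) := by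
  intro x hx y hy
  have hxA : x ∈ A := Finset.mem_of_mem_erase hx
  have hyA : y ∈ A := Finset.mem_of_mem_erase hy
  obtain ⟨p, hp, hpl, hpsupp⟩ := hA x hxA y hyA
  by_cases hℓp : ℓ ∈ p.support
  · exfalso
    -- ℓ is on the path from r to x or from r to y; get a contradiction with maximality
    obtain ⟨prx, hprx, _, _⟩ := hA r hr x hxA
    obtain ⟨pry, hpry, _, _⟩ := hA r hr y hyA
    have hsep := tree_sep hT p hp hℓp prx hprx pry hpry
    have key : ∀ (z : V) (q : G.Walk r z), q.IsPath → z ∈ A → z ≠ ℓ → ℓ ∈ q.support →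
        False := by
      intro z q hq hzA hzℓ hℓq
      have hq1 : G.dist r ℓ ≤ (q.takeUntil ℓ hℓq).length :=
        SimpleGraph.dist_le _
      have hq2 : 1 ≤ (q.dropUntil ℓ hℓq).length := by
        rcases Nat.eq_zero_or_pos (q.dropUntil ℓ hℓq).length with h0 | h1
        · exact absurd (SimpleGraph.Walk.eq_of_length_eq_zero h0) hzℓ.symm
        · exact h1
      have hqlen : (q.takeUntil ℓ hℓq).length + (q.dropUntil ℓ hℓq).length = q.length := by
        rw [← SimpleGraph.Walk.length_append, SimpleGraph.Walk.take_spec]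
      have hqd : q.length = G.dist r z := tree_path_length_eq_dist hT q hq
      have : G.dist r ℓ + 1 ≤ G.dist r z := by
        omega
      have := hmax z hzA
      omega
    rcases hsep with h | h
    · exact key x prx hprx hxA (Finset.ne_of_mem_erase hx) h
    · exact key y pry hpry hyA (Finset.ne_of_mem_erase hy) h
  · exact ⟨p, hp, hpl, fun z hz => Finset.mem_erase.2
      ⟨fun h => hℓp (h ▸ hz), hpsupp z hz⟩⟩

/-- Main lemma: transport inside a `Good` region. -/
lemma main_transport (hT : G.IsTree) :
    ∀ (k : ℕ) (A : Finset V), A.card = k → Good G A →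
      ∀ (n : ℕ) (S₁ S₂ : Finset V), S₁ ⊆ A → S₂ ⊆ A → S₁.card = n → S₂.card = n →
        ∃ t ≤ n * G.diam, Steps (MA G A) t S₁ S₂ := by
  intro k
  induction k using Nat.strong_induction_on with
  | _ k ih =>
    intro A hk hgood n S₁ S₂ hS₁ hS₂ h₁ h₂
    rcases Nat.eq_zero_or_pos n with rfl | hn
    · have e1 : S₁ = ∅ := Finset.card_eq_zero.1 h₁
      have e2 : S₂ = ∅ := Finset.card_eq_zero.1 h₂
      exact ⟨0, Nat.zero_le _, by rw [e1, e2]; rfl⟩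
    -- A is nonempty
    have hAne : A.Nonempty := by
      obtain ⟨x, hx⟩ := Finset.card_pos.1 (h₂ ▸ hn)
      exact ⟨x, hS₂ hx⟩
    obtain ⟨r, hr⟩ := hAne
    obtain ⟨ℓ, hℓA, hmax⟩ := Finset.exists_max_image A (fun a => G.dist r a) ⟨r, hr⟩
    have hgood' : Good G (A.erase ℓ) := good_erase hT hgood hr hℓA hmax
    have hk' : (A.erase ℓ).card < k := by
      rw [← hk]
      exact Finset.card_erase_lt_of_mem hℓA
    have hAsub : A.erase ℓ ⊆ A := Finset.erase_subset _ _
    -- helper: handle the case ℓ ∈ T₂ \ T₁ (or ℓ ∈ both via the same machinery)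
    have transfer : ∀ (T₁ T₂ : Finset V), T₁ ⊆ A → T₂ ⊆ A → T₁.card = n → T₂.card = n →
        ℓ ∈ T₂ → ∃ t ≤ n * G.diam, Steps (MA G A) t T₁ T₂ := by
      intro T₁ T₂ hT₁ hT₂ hc₁ hc₂ hℓT₂
      obtain ⟨m, rfl⟩ : ∃ m, n = m + 1 := ⟨n - 1, by omega⟩
      by_cases hℓT₁ : ℓ ∈ T₁
      · -- freeze ℓ
        obtain ⟨t, ht, hs⟩ := ih _ hk' _ rfl hgood' m (T₁.erase ℓ) (T₂.erase ℓ)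
          (Finset.erase_subset_erase _ hT₁) (Finset.erase_subset_erase _ hT₂)
          (by rw [Finset.card_erase_of_mem hℓT₁, hc₁]; omega)
          (by rw [Finset.card_erase_of_mem hℓT₂, hc₂]; omega)
        have := steps_lift (G := G) hℓA t _ _ hs
        rw [Finset.insert_erase hℓT₁, Finset.insert_erase hℓT₂] at this
        exact ⟨t, ht.trans (by nlinarith [Nat.zero_le G.diam]), this⟩
      · -- bring a pebble to ℓ, then freeze it
        have hT₁ne : T₁.Nonempty := Finset.card_pos.1 (by omega)
        obtain ⟨u, hu⟩ := hT₁ne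
        obtain ⟨p, _, hpl, hpsupp⟩ := hgood u (hT₁ hu) ℓ hℓA
        obtain ⟨t₀, ht₀, hs₀⟩ := walk_move p T₁ hu hℓT₁ hT₁ hpsupp
        have hs₀' : Steps (MA G A) t₀ T₁ (insert ℓ (T₁.erase u)) := hs₀
        have hsub1 : T₁.erase u ⊆ A.erase ℓ := by
          intro a ha
          refine Finset.mem_erase.2 ⟨fun h => hℓT₁ (h ▸ Finset.mem_of_mem_erase ha), ?_⟩
          exact hT₁ (Finset.mem_of_mem_erase ha)
        obtain ⟨t₁, ht₁, hs₁⟩ := ih _ hk' _ rfl hgood' m (T₁.erase u) (T₂.erase ℓ)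
          hsub1 (Finset.erase_subset_erase _ hT₂)
          (by rw [Finset.card_erase_of_mem hu, hc₁]; omega)
          (by rw [Finset.card_erase_of_mem hℓT₂, hc₂]; omega)
        have hs₁' := steps_lift (G := G) hℓA t₁ _ _ hs₁
        rw [Finset.insert_erase hℓT₂] at hs₁'
        refine ⟨t₀ + t₁, ?_, steps_append t₀ t₁ _ _ _ hs₀' hs₁'⟩
        have : t₀ ≤ G.diam := ht₀.trans hpl
        nlinarith
    by_cases hℓ₂ : ℓ ∈ S₂
    · exact transfer S₁ S₂ hS₁ hS₂ h₁ h₂ hℓ₂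
    · by_cases hℓ₁ : ℓ ∈ S₁
      · obtain ⟨t, ht, hs⟩ := transfer S₂ S₁ hS₂ hS₁ h₂ h₁ hℓ₁
        exact ⟨t, ht, steps_reverse (fun _ _ => ma_symm) t _ _ hs⟩
      · -- ℓ is irrelevant: shrink A
        obtain ⟨t, ht, hs⟩ := ih _ hk' _ rfl hgood' n S₁ S₂
          (fun a ha => Finset.mem_erase.2 ⟨fun h => hℓ₁ (h ▸ ha), hS₁ ha⟩)
          (fun a ha => Finset.mem_erase.2 ⟨fun h => hℓ₂ (h ▸ ha), hS₂ ha⟩) h₁ h₂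
        exact ⟨t, ht, steps_mono (fun _ _ => ma_mono hAsub) t _ _ hs⟩

end TreeTransport

/-- On a tree, `n` indistinguishable pebbles occupying `S₁` can be
moved to occupy `S₂` (with `|S₁| = |S₂| = n`) in at most `n·D(G)` moves. -/
theorem unlabeled_transport_on_tree {V : Type*} [Fintype V] [DecidableEq V]
    (G : SimpleGraph V) (hT : G.IsTree) (n : ℕ) (S₁ S₂ : Finset V)
    (h₁ : S₁.card = n) (h₂ : S₂.card = n) :
    ∃ t : ℕ, t ≤ n * G.diam ∧ Steps (UnlabeledMove G) t S₁ S₂ := by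
  obtain ⟨t, ht, hs⟩ := main_transport hT (Finset.univ.card) Finset.univ rfl
    (good_univ hT) n S₁ S₂ (Finset.subset_univ _) (Finset.subset_univ _) h₁ h₂
  exact ⟨t, ht, steps_mono (fun _ _ h => h.1) t _ _ hs⟩
end

section
/- Let G be a finite tree, and root it at a vertex r, and let S₁, S₂ ⊆ V(G) with |S₁| = |S₂|. Then there is a bijection φ: S₁ → S₂ such that for every v ∈ S₁, the pebble at v can be routed to φ(v) along the unique path in G, in some order, so that no path used at the time of its use contains any other currently occupied vertex. Equivalently: there is an ordering of the pairs (v, φ(v)) such that processing them in that order, each pebble moves along its tree path through only unoccupied vertices. -/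
open SimpleGraph

namespace TreeRouting

set_option linter.unusedSectionVars false

variable {V : Type*} [DecidableEq V] {G : SimpleGraph V}

noncomputable def pth (hT : G.IsTree) (a b : V) : G.Walk a b :=
  (hT.existsUnique_path a b).choose

lemma pth_isPath (hT : G.IsTree) (a b : V) : (pth hT a b).IsPath :=
  (hT.existsUnique_path a b).choose_spec.1

lemma pth_unique (hT : G.IsTree) {a b : V} (q : G.Walk a b) (hq : q.IsPath) :
    q = pth hT a b :=
  (hT.existsUnique_path a b).choose_spec.2 q hq

lemma support_pth_subset_walk (hT : G.IsTree) {a b : V} (w : G.Walk a b) :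
    (pth hT a b).support ⊆ w.support := by
  have h : w.bypass = pth hT a b := pth_unique hT _ w.bypass_isPath
  rw [← h]
  exact w.support_bypass_subset

lemma mem_root_support (hT : G.IsTree) (r : V) {a b x : V}
    (hx : x ∈ (pth hT a b).support) :
    x ∈ (pth hT r a).support ∨ x ∈ (pth hT r b).support := by
  have h := support_pth_subset_walk hT ((pth hT r a).reverse.append (pth hT r b)) hx
  rw [Walk.mem_support_append_iff, Walk.support_reverse, List.mem_reverse] at h
  exact h

lemma support_pth_symm (hT : G.IsTree) (a b : V) :
    (pth hT a b).support = (pth hT b a).support.reverse := by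
  have h : (pth hT b a).reverse = pth hT a b :=
    pth_unique hT _ ((pth_isPath hT b a).reverse)
  rw [← h, Walk.support_reverse]

lemma mem_support_pth_symm (hT : G.IsTree) {a b x : V} :
    x ∈ (pth hT a b).support ↔ x ∈ (pth hT b a).support := by
  rw [support_pth_symm hT a b, List.mem_reverse]

lemma pth_takeUntil (hT : G.IsTree) {a b x : V} (hx : x ∈ (pth hT a b).support) :
    (pth hT a b).takeUntil x hx = pth hT a x :=
  pth_unique hT _ ((pth_isPath hT a b).takeUntil hx)

lemma pth_dropUntil (hT : G.IsTree) {a b x : V} (hx : x ∈ (pth hT a b).support) :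
    (pth hT a b).dropUntil x hx = pth hT x b :=
  pth_unique hT _ ((pth_isPath hT a b).dropUntil hx)

lemma support_pth_drop_subset (hT : G.IsTree) {a b x : V}
    (hx : x ∈ (pth hT a b).support) :
    (pth hT x b).support ⊆ (pth hT a b).support := by
  rw [← pth_dropUntil hT hx]
  exact Walk.support_dropUntil_subset _ hx

lemma length_pth_lt (hT : G.IsTree) {a b x : V} (hx : x ∈ (pth hT a b).support)
    (hxa : x ≠ a) :
    (pth hT x b).length < (pth hT a b).length := by
  have hspec := (pth hT a b).take_spec hx
  have hlen : ((pth hT a b).takeUntil x hx).length + ((pth hT a b).dropUntil x hx).length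
      = (pth hT a b).length := by
    rw [← Walk.length_append, hspec]
  rw [pth_takeUntil hT hx, pth_dropUntil hT hx] at hlen
  have hpos : 0 < (pth hT a x).length := by
    rcases Nat.eq_zero_or_pos (pth hT a x).length with h | h
    · exact absurd (Walk.eq_of_length_eq_zero h) (Ne.symm hxa)
    · exact h
  omega

lemma length_root_lt (hT : G.IsTree) {r a x : V} (hx : x ∈ (pth hT r a).support)
    (hxa : x ≠ a) :
    (pth hT r x).length < (pth hT r a).length := by
  rw [mem_support_pth_symm hT] at hx
  have := length_pth_lt hT hx hxa
  calc (pth hT r x).length = (pth hT x r).length := by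
        rw [show pth hT x r = (pth hT r x).reverse from
          (pth_unique hT _ ((pth_isPath hT r x).reverse)).symm, Walk.length_reverse]
    _ < (pth hT a r).length := this
    _ = (pth hT r a).length := by
        rw [show pth hT a r = (pth hT r a).reverse from
          (pth_unique hT _ ((pth_isPath hT r a).reverse)).symm, Walk.length_reverse]

lemma perm_toList_erase {s : Finset V} {a : V} (h : a ∈ s) :
    s.toList.Perm (a :: (s.erase a).toList) := by
  have h2 := Finset.toList_insert (Finset.notMem_erase a s)
  rwa [Finset.insert_erase h] at h2


lemma exists_nearest (hT : G.IsTree) (ℓ : V) {S : Finset V} (hS : S.Nonempty) :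
    ∃ v ∈ S, ∀ x ∈ (pth hT v ℓ).support, x ∈ S → x = v := by
  classical
  obtain ⟨a, ha⟩ := hS
  have haT : a ∈ S.filter (fun u => u ∈ (pth hT a ℓ).support) := by
    simp [ha, Walk.start_mem_support]
  obtain ⟨v, hvT, hvmin⟩ := Finset.exists_min_image _ (fun u => (pth hT u ℓ).length)
    ⟨a, haT⟩
  rw [Finset.mem_filter] at hvT
  refine ⟨v, hvT.1, ?_⟩
  intro x hx hxS
  by_contra hxv
  have hsub : (pth hT v ℓ).support ⊆ (pth hT a ℓ).support :=
    support_pth_drop_subset hT hvT.2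
  have hxT : x ∈ S.filter (fun u => u ∈ (pth hT a ℓ).support) := by
    rw [Finset.mem_filter]; exact ⟨hxS, hsub hx⟩
  have h1 := hvmin x hxT
  have h2 := length_pth_lt hT hx hxv
  omega

lemma max_not_mem_support (hT : G.IsTree) (r : V) {ℓ a b : V}
    (hmax_a : (pth hT r a).length ≤ (pth hT r ℓ).length)
    (hmax_b : (pth hT r b).length ≤ (pth hT r ℓ).length)
    (hla : ℓ ≠ a) (hlb : ℓ ≠ b) : ℓ ∉ (pth hT a b).support := by
  intro h
  rcases mem_root_support hT r h with h' | h'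
  · have := length_root_lt hT h' hla; omega
  · have := length_root_lt hT h' hlb; omega

lemma aux (hT : G.IsTree) (r : V) :
    ∀ (n : ℕ) (S₁ S₂ B : Finset V), S₁.card = n → S₂.card = n →
    (∀ x ∈ B, ∀ a ∈ S₁ ∪ S₂, ∀ b ∈ S₁ ∪ S₂, x ∉ (pth hT a b).support) →
    ∃ l : List (V × V),
      (l.map Prod.fst).Perm S₁.toList ∧
      (l.map Prod.snd).Perm S₂.toList ∧
      ∀ pre cur suf, l = pre ++ cur :: suf →
        ∀ x ∈ (pth hT cur.1 cur.2).support, x ≠ cur.1 →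
          x ∉ B ∧
          x ∉ (S₁ \ (pre.map Prod.fst).toFinset) ∪ (pre.map Prod.snd).toFinset := by
  intro n
  induction n with
  | zero =>
      intro S₁ S₂ B h1 h2 _
      refine ⟨[], ?_, ?_, ?_⟩
      · simp [Finset.card_eq_zero.mp h1]
      · simp [Finset.card_eq_zero.mp h2]
      · intro pre cur suf heq
        exact absurd heq (by simp)
  | succ n ih =>
      intro S₁ S₂ B hc1 hc2 hB
      have hS₁ne : S₁.Nonempty := Finset.card_pos.mp (by omega)
      have hS₂ne : S₂.Nonempty := Finset.card_pos.mp (by omega)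
      have hUne : (S₁ ∪ S₂).Nonempty := by
        obtain ⟨a, ha⟩ := hS₁ne
        exact ⟨a, Finset.mem_union_left _ ha⟩
      obtain ⟨ℓ, hℓmem, hℓmax⟩ := Finset.exists_max_image (S₁ ∪ S₂)
        (fun x => (pth hT r x).length) hUne
      by_cases hℓ2 : ℓ ∈ S₂
      · -- pair (v, ℓ) processed first
        obtain ⟨v, hv1, hvmin⟩ := exists_nearest hT ℓ hS₁ne
        have hℓe : ℓ ∉ S₁.erase v := by
          intro h
          exact (Finset.ne_of_mem_erase h)
            (hvmin ℓ (Walk.end_mem_support _) (Finset.mem_of_mem_erase h))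
        have hcard1 : (S₁.erase v).card = n := by
          rw [Finset.card_erase_of_mem hv1, hc1]; omega
        have hcard2 : (S₂.erase ℓ).card = n := by
          rw [Finset.card_erase_of_mem hℓ2, hc2]; omega
        have hsub : S₁.erase v ∪ S₂.erase ℓ ⊆ S₁ ∪ S₂ :=
          Finset.union_subset_union (Finset.erase_subset _ _) (Finset.erase_subset _ _)
        have hB' : ∀ x ∈ insert ℓ B, ∀ a ∈ S₁.erase v ∪ S₂.erase ℓ,
            ∀ b ∈ S₁.erase v ∪ S₂.erase ℓ, x ∉ (pth hT a b).support := by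
          intro x hx a ha b hb
          rcases Finset.mem_insert.mp hx with rfl | hxB
          · refine max_not_mem_support hT r (hℓmax a (hsub ha)) (hℓmax b (hsub hb)) ?_ ?_
            · rintro rfl
              rcases Finset.mem_union.mp ha with h | h
              · exact hℓe h
              · exact Finset.notMem_erase _ _ h
            · rintro rfl
              rcases Finset.mem_union.mp hb with h | h
              · exact hℓe h
              · exact Finset.notMem_erase _ _ h
          · exact hB x hxB a (hsub ha) b (hsub hb)
        obtain ⟨l', hp1, hp2, hstep⟩ :=
          ih (S₁.erase v) (S₂.erase ℓ) (insert ℓ B) hcard1 hcard2 hB'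
        refine ⟨(v, ℓ) :: l', ?_, ?_, ?_⟩
        · exact (hp1.cons v).trans (perm_toList_erase hv1).symm
        · exact (hp2.cons ℓ).trans (perm_toList_erase hℓ2).symm
        · intro pre cur suf heq x hx hxne
          cases pre with
          | nil =>
              simp only [List.nil_append, List.cons.injEq] at heq
              obtain ⟨h1, _⟩ := heq
              subst h1
              simp only [List.map_nil, List.toFinset_nil, Finset.sdiff_empty,
                Finset.union_empty]
              constructor
              · intro hxB
                exact hB x hxB v (Finset.mem_union_left _ hv1)
                  ℓ (Finset.mem_union_right _ hℓ2) hx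
              · intro hxS₁
                exact hxne (hvmin x hx hxS₁)
          | cons hd pre' =>
              simp only [List.cons_append, List.cons.injEq] at heq
              obtain ⟨h1, h2⟩ := heq
              subst h1
              obtain ⟨hxB', hxOcc'⟩ := hstep pre' cur suf h2 x hx hxne
              constructor
              · exact fun h => hxB' (Finset.mem_insert_of_mem h)
              · intro hmem
                rcases Finset.mem_union.mp hmem with hmem | hmem
                · rw [Finset.mem_sdiff] at hmem
                  obtain ⟨hxS, hxσ⟩ := hmem
                  simp only [List.map_cons, List.toFinset_cons, Finset.mem_insert,
                    not_or] at hxσ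
                  exact hxOcc' (Finset.mem_union_left _ (Finset.mem_sdiff.mpr
                    ⟨Finset.mem_erase.mpr ⟨hxσ.1, hxS⟩, hxσ.2⟩))
                · simp only [List.map_cons, List.toFinset_cons, Finset.mem_insert] at hmem
                  rcases hmem with rfl | hmem
                  · exact hxB' (Finset.mem_insert_self _ _)
                  · exact hxOcc' (Finset.mem_union_right _ hmem)
      · -- ℓ ∈ S₁ \ S₂ : pair (ℓ, w) processed last
        have hℓ1 : ℓ ∈ S₁ := by
          rcases Finset.mem_union.mp hℓmem with h | h
          · exact h
          · exact absurd h hℓ2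
        obtain ⟨w, hw2, hwmin⟩ := exists_nearest hT ℓ hS₂ne
        have hcard1 : (S₁.erase ℓ).card = n := by
          rw [Finset.card_erase_of_mem hℓ1, hc1]; omega
        have hcard2 : (S₂.erase w).card = n := by
          rw [Finset.card_erase_of_mem hw2, hc2]; omega
        have hsub : S₁.erase ℓ ∪ S₂.erase w ⊆ S₁ ∪ S₂ :=
          Finset.union_subset_union (Finset.erase_subset _ _) (Finset.erase_subset _ _)
        have hB' : ∀ x ∈ insert ℓ B, ∀ a ∈ S₁.erase ℓ ∪ S₂.erase w,
            ∀ b ∈ S₁.erase ℓ ∪ S₂.erase w, x ∉ (pth hT a b).support := by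
          intro x hx a ha b hb
          rcases Finset.mem_insert.mp hx with rfl | hxB
          · refine max_not_mem_support hT r (hℓmax a (hsub ha)) (hℓmax b (hsub hb)) ?_ ?_
            · rintro rfl
              rcases Finset.mem_union.mp ha with h | h
              · exact Finset.notMem_erase _ _ h
              · exact hℓ2 (Finset.mem_of_mem_erase h)
            · rintro rfl
              rcases Finset.mem_union.mp hb with h | h
              · exact Finset.notMem_erase _ _ h
              · exact hℓ2 (Finset.mem_of_mem_erase h)
          · exact hB x hxB a (hsub ha) b (hsub hb)
        obtain ⟨l', hp1, hp2, hstep⟩ :=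
          ih (S₁.erase ℓ) (S₂.erase w) (insert ℓ B) hcard1 hcard2 hB'
        refine ⟨l' ++ [(ℓ, w)], ?_, ?_, ?_⟩
        · rw [List.map_append]
          exact (List.perm_append_singleton _ _).trans
            ((hp1.cons ℓ).trans (perm_toList_erase hℓ1).symm)
        · rw [List.map_append]
          exact (List.perm_append_singleton _ _).trans
            ((hp2.cons w).trans (perm_toList_erase hw2).symm)
        · have hfinal : ∀ x ∈ (pth hT ℓ w).support, x ≠ ℓ →
              x ∉ B ∧
              x ∉ (S₁ \ (l'.map Prod.fst).toFinset) ∪ (l'.map Prod.snd).toFinset := by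
            intro x hx hxne
            have hσ : (l'.map Prod.fst).toFinset = S₁.erase ℓ := by
              rw [List.toFinset_eq_of_perm _ _ hp1, Finset.toList_toFinset]
            have hδ : (l'.map Prod.snd).toFinset = S₂.erase w := by
              rw [List.toFinset_eq_of_perm _ _ hp2, Finset.toList_toFinset]
            constructor
            · intro hxB
              exact hB x hxB ℓ (Finset.mem_union_left _ hℓ1)
                w (Finset.mem_union_right _ hw2) hx
            · rw [hσ, hδ]
              intro hmem
              rcases Finset.mem_union.mp hmem with hmem | hmem
              · rw [Finset.mem_sdiff] at hmem
                apply hxne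
                by_contra hne
                exact hmem.2 (Finset.mem_erase.mpr ⟨hne, hmem.1⟩)
              · rw [Finset.mem_erase] at hmem
                refine hmem.1 (hwmin x ?_ hmem.2)
                exact (mem_support_pth_symm hT).mp hx
          intro pre cur suf heq x hx hxne
          rw [List.append_eq_append_iff] at heq
          rcases heq with ⟨a', ha1, ha2⟩ | ⟨c', hc1', hc2'⟩
          · cases a' with
            | nil =>
                simp only [List.nil_append, List.cons.injEq] at ha2
                obtain ⟨h1, h2⟩ := ha2
                subst h1
                rw [List.append_nil] at ha1
                subst ha1
                exact hfinal x hx hxne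
            | cons h t =>
                simp only [List.cons_append, List.cons.injEq] at ha2
                exact absurd ha2.2.symm (by simp)
          · cases c' with
            | nil =>
                simp only [List.nil_append] at hc2'
                obtain ⟨h1, h2⟩ := List.cons.inj hc2'
                subst h1
                rw [List.append_nil] at hc1'
                subst hc1'
                exact hfinal x hx hxne
            | cons h t =>
                simp only [List.cons_append] at hc2'
                obtain ⟨h1, h2⟩ := List.cons.inj hc2'
                subst h1
                subst hc1'
                obtain ⟨hxB', hxOcc'⟩ := hstep pre cur t rfl x hx hxne
                constructor
                · exact fun hh => hxB' (Finset.mem_insert_of_mem hh)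
                · intro hmem
                  rcases Finset.mem_union.mp hmem with hmem | hmem
                  · rw [Finset.mem_sdiff] at hmem
                    obtain ⟨hxS, hxσ⟩ := hmem
                    rcases eq_or_ne x ℓ with rfl | hne
                    · exact hxB' (Finset.mem_insert_self _ _)
                    · exact hxOcc' (Finset.mem_union_left _ (Finset.mem_sdiff.mpr
                        ⟨Finset.mem_erase.mpr ⟨hne, hxS⟩, hxσ⟩))
                  · exact hxOcc' (Finset.mem_union_right _ hmem)

end TreeRouting

/-- On a tree, for `S₁, S₂ ⊆ V` with `|S₁| = |S₂|`, there is a pairing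
of `S₁` with `S₂` and an ordering of the pairs `(v, φ v)` such that when the pairs are
processed in that order, each pebble can be routed along its unique tree path entirely
through vertices unoccupied at that time (other than its own starting vertex). -/
theorem tree_routing_order {V : Type*} [Fintype V] [DecidableEq V]
    (G : SimpleGraph V) (hT : G.IsTree) (r : V) (S₁ S₂ : Finset V)
    (hcard : S₁.card = S₂.card) :
    ∃ l : List (V × V),
      (l.map Prod.fst).Perm S₁.toList ∧
      (l.map Prod.snd).Perm S₂.toList ∧
      ∀ pre cur suf, l = pre ++ cur :: suf →
        ∀ q : G.Walk cur.1 cur.2, q.IsPath →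
          ∀ x ∈ q.support, x ≠ cur.1 →
            x ∉ (S₁ \ (pre.map Prod.fst).toFinset) ∪ (pre.map Prod.snd).toFinset := by
  obtain ⟨l, h1, h2, h3⟩ :=
    TreeRouting.aux hT r S₁.card S₁ S₂ ∅ rfl hcard.symm (by simp)
  refine ⟨l, h1, h2, ?_⟩
  intro pre cur suf heq q hq x hx hxne
  rw [TreeRouting.pth_unique hT q hq] at hx
  exact (h3 pre cur suf heq x hx hxne).2
end

section
/- Let G be a cycle with N vertices carrying n < N labeled pebbles. Then every sequence of moves preserves the cyclic order of the pebbles around the cycle; in particular, if n ≥ 3 and N − n ≥ 1, a configuration in which three given pebbles appear in one cyclic order cannot be transformed into a configuration in which they appear in the opposite cyclic order. -/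
/-- The cycle graph on `ZMod N`: `x` and `y` are adjacent iff they differ by `1`. -/
def cycleG (N : ℕ) : SimpleGraph (ZMod N) :=
  SimpleGraph.fromRel (fun x y => x - y = 1)

private lemma valadd {N : ℕ} [NeZero N] (x : ZMod N) (h : x + 1 ≠ 0) :
    (x + 1).val = x.val + 1 := by
  rcases Nat.lt_or_ge 1 N with hN | hN
  · haveI : Fact (1 < N) := ⟨hN⟩
    have h1 : (x + 1).val = (x.val + 1) % N := by
      rw [ZMod.val_add, ZMod.val_one]
    have hlt : x.val < N := ZMod.val_lt x
    have hne : x.val + 1 ≠ N := by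
      intro he
      apply h
      rw [← ZMod.val_eq_zero, h1, he, Nat.mod_self]
    rw [h1, Nat.mod_eq_of_lt (by omega)]
  · exfalso
    have : N = 1 := le_antisymm hN (Nat.one_le_iff_ne_zero.mpr (NeZero.ne N))
    subst this
    exact h (Subsingleton.elim _ _)

private lemma valsub {N : ℕ} [NeZero N] (x : ZMod N) (h : x ≠ 0) :
    x.val = (x - 1).val + 1 := by
  have := valadd (x - 1) (by simpa using h)
  simpa using this

private lemma valne {N : ℕ} [NeZero N] {x y : ZMod N} (h : x ≠ y) : x.val ≠ y.val :=
  fun he => h (ZMod.val_injective N he)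

private lemma step_lemma {N : ℕ} [NeZero N] {n : ℕ} {f g : Fin n → ZMod N}
    (hf : Function.Injective f) (hm : PebbleMove (cycleG N) f g) :
    Function.Injective g ∧ ∀ i j k : Fin n, i ≠ j → j ≠ k → i ≠ k →
      ((f j - f i).val < (f k - f i).val ↔ (g j - g i).val < (g k - g i).val) := by
  obtain ⟨p, hadj, hfresh, hrest⟩ := hm
  rw [cycleG, SimpleGraph.fromRel_adj] at hadj
  obtain ⟨-, he⟩ := hadj
  have hg : Function.Injective g := by
    intro a b hab
    by_cases ha : a = p
    · by_cases hb : b = p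
      · exact ha.trans hb.symm
      · rw [ha] at hab
        exact absurd ((hab.trans (hrest b hb)).symm) (hfresh b)
    · by_cases hb : b = p
      · rw [hb] at hab
        exact absurd ((hrest a ha).symm.trans hab) (hfresh a)
      · exact hf ((hrest a ha).symm.trans (hab.trans (hrest b hb)))
  refine ⟨hg, fun i j k hij hjk hik => ?_⟩
  have hfji : f j - f i ≠ 0 := sub_ne_zero.mpr (fun h => hij (hf h.symm))
  have hfki : f k - f i ≠ 0 := sub_ne_zero.mpr (fun h => hik (hf h.symm))
  have hfjk : (f j - f i).val ≠ (f k - f i).val :=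
    valne (fun h => hjk (hf (by linear_combination h)))
  by_cases hpi : p = i
  · subst hpi
    have hgj : g j = f j := hrest j (by rintro rfl; exact hij rfl)
    have hgk : g k = f k := hrest k (by rintro rfl; exact hik rfl)
    rcases he with he | he
    · -- f p - g p = 1, i.e. g p = f p - 1
      have hgp : g p = f p - 1 := by linear_combination -he
      have hj : g j - g p = (f j - f p) + 1 := by rw [hgj, hgp]; ring
      have hk : g k - g p = (f k - f p) + 1 := by rw [hgk, hgp]; ring
      have hj0 : (f j - f p) + 1 ≠ 0 := by
        intro h; exact hfresh j (by linear_combination h - hgp)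
      have hk0 : (f k - f p) + 1 ≠ 0 := by
        intro h; exact hfresh k (by linear_combination h - hgp)
      rw [hj, hk, valadd _ hj0, valadd _ hk0]
      omega
    · -- g p = f p + 1
      have hj : g j - g p = (f j - f p) - 1 := by
        rw [hgj]; linear_combination -he
      have hk : g k - g p = (f k - f p) - 1 := by
        rw [hgk]; linear_combination -he
      have h1 := valsub _ hfji
      have h2 := valsub _ hfki
      rw [hj, hk]
      omega
  · have hgi : g i = f i := hrest i (by rintro rfl; exact hpi rfl)
    by_cases hpj : p = j
    · subst hpj
      have hgk : g k = f k := hrest k (by rintro rfl; exact hjk rfl)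
      have hne1 : (g p - g i).val ≠ (f k - f i).val := by
        refine valne (fun h => hfresh k ?_)
        rw [hgi] at h
        linear_combination -h
      rw [hgi] at hne1
      rw [hgi, hgk]
      rcases he with he | he
      · have hgp : g p - f i = (f p - f i) - 1 := by linear_combination -he
        have h1 := valsub _ hfji
        rw [hgp] at hne1 ⊢
        omega
      · have hgp : g p - f i = (f p - f i) + 1 := by linear_combination he
        have h0 : (f p - f i) + 1 ≠ 0 := by
          intro h; exact hfresh i (by linear_combination -hgp - h)
        rw [hgp] at hne1 ⊢
        rw [valadd _ h0] at hne1 ⊢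
        omega
    · by_cases hpk : p = k
      · subst hpk
        have hgj : g j = f j := hrest j (by rintro rfl; exact hjk rfl)
        have hne1 : (g p - g i).val ≠ (f j - f i).val := by
          refine valne (fun h => hfresh j ?_)
          rw [hgi] at h
          linear_combination -h
        rw [hgi] at hne1
        rw [hgi, hgj]
        rcases he with he | he
        · have hgp : g p - f i = (f p - f i) - 1 := by linear_combination -he
          have h1 := valsub _ hfki
          rw [hgp] at hne1 ⊢
          omega
        · have hgp : g p - f i = (f p - f i) + 1 := by linear_combination he
          have h0 : (f p - f i) + 1 ≠ 0 := by
            intro h; exact hfresh i (by linear_combination -hgp - h)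
          rw [hgp] at hne1 ⊢
          rw [valadd _ h0] at hne1 ⊢
          omega
      · have hgj : g j = f j := hrest j (by rintro rfl; exact hpj rfl)
        have hgk : g k = f k := hrest k (by rintro rfl; exact hpk rfl)
        rw [hgi, hgj, hgk]

/-- On the cycle with `N` vertices carrying `n < N` labeled pebbles,
every sequence of moves preserves the cyclic order of the pebbles: for any three
distinct pebbles `i, j, k`, pebble `j` comes before pebble `k` when reading around the
cycle starting from pebble `i` in the initial configuration iff the same holds in the
final configuration.  In particular (for `n ≥ 3`, `N − n ≥ 1`) the cyclic order of three
pebbles can never be reversed. -/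
theorem cycle_preserves_cyclic_order (N : ℕ) [NeZero N] (n : ℕ) (hn : n < N)
    (hn3 : 3 ≤ n) (hblank : 1 ≤ N - n)
    (f g : Fin n → ZMod N) (hf : Function.Injective f)
    (hreach : Relation.ReflTransGen (PebbleMove (cycleG N)) f g) :
    ∀ i j k : Fin n, i ≠ j → j ≠ k → i ≠ k →
      ((f j - f i).val < (f k - f i).val ↔ (g j - g i).val < (g k - g i).val) := by
  have main : Function.Injective g ∧ ∀ i j k : Fin n, i ≠ j → j ≠ k → i ≠ k →
      ((f j - f i).val < (f k - f i).val ↔ (g j - g i).val < (g k - g i).val) := by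
    induction hreach with
    | refl => exact ⟨hf, fun i j k _ _ _ => Iff.rfl⟩
    | tail _ hmove ih =>
      obtain ⟨hinj, hiff⟩ := ih
      obtain ⟨hinj', hiff'⟩ := step_lemma hinj hmove
      exact ⟨hinj', fun i j k h1 h2 h3 =>
        (hiff i j k h1 h2 h3).trans (hiff' i j k h1 h2 h3)⟩
  exact main.2
end
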